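/- Let a,b,c,d be points on the unit circle S¹ occurring in this positive order, and assume a − b + c − d ≠ 0. Then there exist a complex number r with r² = (a−b)(b−c)(c−d)(d−a) and a sign ε ∈ {−1, 1} such that the point w = ((ac − bd) + ε·r)/(a − b + c − d) satisfies |w| < 1, w ∈ J*[a,c] and w ∈ J*[b,d]; i.e., w is the point of intersection of the hyperbolic lines J*[a,c] and J*[b,d]. -/

import Mathlib

/-!
A circle through unit points `a, c` orthogonal to the unit circle has the equation
`(a + c) (|w|² + 1) = 2 w + 2 a c w̄`. If `ρ² = (a - b)(b - c)(c - d)(d - a)` and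
`ρ̄ = -ρ / (a b c d)`, then `w = (a c - b d + ρ) / (a - b + c - d)` satisfies the equations for
`a, c` and for `b, d`, and so does the point `w'` obtained from `-ρ`; moreover `|w| |w'| = 1`.
Neither point is on the unit circle, which meets the two circles in `{a, c}` and `{b, d}`, so one
of them lies in the disk. The positive order of the points is what provides such a `ρ`: by
`e^{iβ} - e^{iα} = 2i sin((β - α)/2) e^{i(α + β)/2}` with all four sines positive,
`(a - b)(b - c)(c - d)(d - a) = -t · a b c d` for some `t > 0`.
-/

open ComplexConjugate

open scoped Classical in
/-- The hyperbolic line in the unit disk with endpoints `a, c` on the unit circle. -/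
noncomputable def Jstar (a c : ℂ) : Set ℂ :=
  if c = -a then
    {z : ℂ | ‖z‖ < 1 ∧ ∃ r : ℝ, z / a = (r : ℂ)}
  else
    {z : ℂ | ‖z‖ < 1 ∧
      ((‖z‖ : ℂ) ^ 2 + 1 =
        conj (2 * (a - c) / (a * conj c - conj a * c)) * z +
          (2 * (a - c) / (a * conj c - conj a * c)) * conj z)}

open Complex

lemma ne_zero_of_norm_eq_one {E : Type*} [NormedAddGroup E] {x : E} (hx : ‖x‖ = 1) : x ≠ 0 :=
  norm_ne_zero_iff.mp (by rw [hx]; exact one_ne_zero)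

/-- The equation of `Jstar a c` with the denominators cleared; for `c = -a` it is the equation
of the diameter through `a`. -/
def OnOrthCircle (a c w : ℂ) : Prop :=
  (a + c) * ((‖w‖ : ℂ) ^ 2 + 1) = 2 * w + 2 * a * c * conj w

section OrthCircle

variable {a c w : ℂ}

lemma mem_Jstar_of_onOrthCircle (ha : ‖a‖ = 1) (hc : ‖c‖ = 1) (hac : a ≠ c) (hw : ‖w‖ < 1)
    (h : OnOrthCircle a c w) : w ∈ Jstar a c := by
  have ha0 := ne_zero_of_norm_eq_one ha
  have hc0 := ne_zero_of_norm_eq_one hc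
  rw [OnOrthCircle, ← mul_conj'] at h
  unfold Jstar
  split_ifs with hca
  · subst hca
    refine ⟨hw, (w / a).re, (conj_eq_iff_re.mp ?_).symm⟩
    rw [map_div₀, ← inv_eq_conj ha]
    field_simp
    linear_combination h / 2
  · have hsum : a + c ≠ 0 := fun hs => hca (by linear_combination hs)
    have hcenter : 2 * (a - c) / (a * conj c - conj a * c) = 2 * a * c / (a + c) := by
      rw [← inv_eq_conj ha, ← inv_eq_conj hc]
      have hsq : a ^ 2 - c ^ 2 ≠ 0 := by
        rw [sq_sub_sq]; exact mul_ne_zero hsum (sub_ne_zero.mpr hac)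
      field_simp
      ring
    have hcenter_conj : conj (2 * a * c / (a + c)) = 2 / (a + c) := by
      simp only [map_div₀, map_mul, map_add, map_ofNat, ← inv_eq_conj ha,
        ← inv_eq_conj hc, inv_add_inv ha0 hc0]
      field_simp
    refine ⟨hw, ?_⟩
    rw [hcenter, hcenter_conj, ← mul_conj']
    field_simp
    linear_combination h

lemma eq_or_eq_of_onOrthCircle_of_norm_eq_one (h : OnOrthCircle a c w) (hw : ‖w‖ = 1) :
    w = a ∨ w = c := by
  rw [OnOrthCircle, ← mul_conj'] at h
  have hwc : w * conj w = 1 := by rw [mul_conj', hw]; simp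
  have : (w - a) * (w - c) = 0 := by
    linear_combination (-w / 2) * h + ((a + c) * w / 2 - a * c) * hwc
  rcases mul_eq_zero.mp this with h | h
  · exact .inl (sub_eq_zero.mp h)
  · exact .inr (sub_eq_zero.mp h)

end OrthCircle

noncomputable def geodesicMeet (a b c d ρ : ℂ) : ℂ := (a * c - b * d + ρ) / (a - b + c - d)

section Intersection

variable {a b c d ρ : ℂ}

lemma mul_conj_sub_add_sub (ha : ‖a‖ = 1) (hb : ‖b‖ = 1) (hc : ‖c‖ = 1) (hd : ‖d‖ = 1) :
    a * b * c * d * conj (a - b + c - d) = b * c * d - a * c * d + a * b * d - a * b * c := by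
  have := ne_zero_of_norm_eq_one ha
  have := ne_zero_of_norm_eq_one hb
  have := ne_zero_of_norm_eq_one hc
  have := ne_zero_of_norm_eq_one hd
  simp only [map_sub, map_add, ← inv_eq_conj, ha, hb, hc, hd]
  field_simp

lemma conj_geodesicMeet (ha : ‖a‖ = 1) (hb : ‖b‖ = 1) (hc : ‖c‖ = 1) (hd : ‖d‖ = 1)
    (hρ : conj ρ = -ρ / (a * b * c * d)) :
    conj (geodesicMeet a b c d ρ) =
      -(a * c - b * d + ρ) / (b * c * d - a * c * d + a * b * d - a * b * c) := by
  have := ne_zero_of_norm_eq_one ha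
  have := ne_zero_of_norm_eq_one hb
  have := ne_zero_of_norm_eq_one hc
  have := ne_zero_of_norm_eq_one hd
  rw [geodesicMeet, map_div₀, ← mul_conj_sub_add_sub ha hb hc hd, div_mul_eq_div_div]
  congr 1
  simp only [map_add, map_sub, map_mul, hρ, ← inv_eq_conj, ha, hb, hc, hd]
  field_simp
  ring

private lemma onOrthCircle_geodesicMeet_left (ha : ‖a‖ = 1) (hb : ‖b‖ = 1) (hc : ‖c‖ = 1)
    (hd : ‖d‖ = 1) (hD : a - b + c - d ≠ 0) (hρ : ρ ^ 2 = (a - b) * (b - c) * (c - d) * (d - a))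
    (hρc : conj ρ = -ρ / (a * b * c * d)) :
    OnOrthCircle a c (geodesicMeet a b c d ρ) := by
  have hQ : b * c * d - a * c * d + a * b * d - a * b * c ≠ 0 := by
    rw [← mul_conj_sub_add_sub ha hb hc hd]
    refine mul_ne_zero ?_ ((map_ne_zero _).mpr hD)
    simp [ne_zero_of_norm_eq_one, ha, hb, hc, hd]
  set N := a * c - b * d + ρ
  set D := a - b + c - d
  set Q := b * c * d - a * c * d + a * b * d - a * b * c
  rw [OnOrthCircle, ← mul_conj', conj_geodesicMeet ha hb hc hd hρc, geodesicMeet]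
  -- after multiplying by `D * Q` this is a polynomial identity modulo `ρ² = P`
  refine mul_left_cancel₀ (mul_ne_zero hD hQ) ?_
  have hx : N / D * D = N := div_mul_cancel₀ N hD
  have hy : -N / Q * Q = -N := div_mul_cancel₀ (-N) hQ
  linear_combination ((a + c) * (-N / Q) * Q - 2 * Q) * hx + ((a + c) * N - 2 * a * c * D) * hy -
    (a + c) * hρ

lemma onOrthCircle_geodesicMeet (ha : ‖a‖ = 1) (hb : ‖b‖ = 1) (hc : ‖c‖ = 1) (hd : ‖d‖ = 1)
    (hD : a - b + c - d ≠ 0) (hρ : ρ ^ 2 = (a - b) * (b - c) * (c - d) * (d - a))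
    (hρc : conj ρ = -ρ / (a * b * c * d)) :
    OnOrthCircle a c (geodesicMeet a b c d ρ) ∧
      OnOrthCircle b d (geodesicMeet a b c d ρ) := by
  refine ⟨onOrthCircle_geodesicMeet_left ha hb hc hd hD hρ hρc, ?_⟩
  have hrot : geodesicMeet a b c d ρ = geodesicMeet b c d a (-ρ) := by
    rw [geodesicMeet, geodesicMeet, ← neg_div_neg_eq]; congr 1 <;> ring
  rw [hrot]
  refine onOrthCircle_geodesicMeet_left hb hc hd ha (fun h => hD (by linear_combination -h))
    (by linear_combination hρ) ?_
  rw [map_neg, hρc]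
  ring

lemma norm_geodesicMeet_mul_norm_geodesicMeet_neg (ha : ‖a‖ = 1) (hb : ‖b‖ = 1) (hc : ‖c‖ = 1)
    (hd : ‖d‖ = 1) (hD : a - b + c - d ≠ 0) (hρ : ρ ^ 2 = (a - b) * (b - c) * (c - d) * (d - a)) :
    ‖geodesicMeet a b c d ρ‖ * ‖geodesicMeet a b c d (-ρ)‖ = 1 := by
  have hprod : (a * c - b * d + ρ) * (a * c - b * d + -ρ) =
      -((a - b + c - d) * (b * c * d - a * c * d + a * b * d - a * b * c)) := by
    linear_combination -hρ
  have hQ : ‖b * c * d - a * c * d + a * b * d - a * b * c‖ = ‖a - b + c - d‖ := by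
    rw [← mul_conj_sub_add_sub ha hb hc hd, norm_mul, norm_conj]
    simp [ha, hb, hc, hd]
  have hD' : ‖a - b + c - d‖ ≠ 0 := norm_ne_zero_iff.mpr hD
  rw [← norm_mul, geodesicMeet, geodesicMeet, div_mul_div_comm, hprod, norm_div, norm_neg,
    norm_mul, norm_mul, hQ]
  field_simp

lemma exists_sign_geodesicMeet_mem_Jstar (ha : ‖a‖ = 1) (hb : ‖b‖ = 1) (hc : ‖c‖ = 1)
    (hd : ‖d‖ = 1) (hab : a ≠ b) (hbc : b ≠ c) (hcd : c ≠ d) (hda : d ≠ a) (hac : a ≠ c)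
    (hbd : b ≠ d) (hD : a - b + c - d ≠ 0) (hρ : ρ ^ 2 = (a - b) * (b - c) * (c - d) * (d - a))
    (hρc : conj ρ = -ρ / (a * b * c * d)) :
    ∃ ε : ℂ, (ε = 1 ∨ ε = -1) ∧ ‖geodesicMeet a b c d (ε * ρ)‖ < 1 ∧
      geodesicMeet a b c d (ε * ρ) ∈ Jstar a c ∧ geodesicMeet a b c d (ε * ρ) ∈ Jstar b d := by
  have hmem : ∀ σ : ℂ, σ ^ 2 = (a - b) * (b - c) * (c - d) * (d - a) →
      conj σ = -σ / (a * b * c * d) → ‖geodesicMeet a b c d σ‖ < 1 →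
      geodesicMeet a b c d σ ∈ Jstar a c ∧ geodesicMeet a b c d σ ∈ Jstar b d := by
    intro σ hσ hσc hw
    obtain ⟨hAC, hBD⟩ := onOrthCircle_geodesicMeet ha hb hc hd hD hσ hσc
    exact ⟨mem_Jstar_of_onOrthCircle ha hc hac hw hAC, mem_Jstar_of_onOrthCircle hb hd hbd hw hBD⟩
  have hne : ‖geodesicMeet a b c d ρ‖ ≠ 1 := by
    intro h1
    obtain ⟨hAC, hBD⟩ := onOrthCircle_geodesicMeet ha hb hc hd hD hρ hρc
    rcases eq_or_eq_of_onOrthCircle_of_norm_eq_one hAC h1 with h | h <;>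
      rcases eq_or_eq_of_onOrthCircle_of_norm_eq_one hBD h1 with h' | h'
    exacts [hab (h.symm.trans h'), hda (h'.symm.trans h), hbc (h'.symm.trans h),
      hcd (h.symm.trans h')]
  have hprod := norm_geodesicMeet_mul_norm_geodesicMeet_neg ha hb hc hd hD hρ
  rcases hne.lt_or_gt with hlt | hgt
  · refine ⟨1, .inl rfl, ?_⟩
    rw [one_mul]
    exact ⟨hlt, hmem ρ hρ hρc hlt⟩
  · have hlt : ‖geodesicMeet a b c d (-ρ)‖ < 1 := by
      nlinarith [norm_nonneg (geodesicMeet a b c d (-ρ))]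
    refine ⟨-1, .inr rfl, ?_⟩
    rw [neg_one_mul]
    exact ⟨hlt, hmem (-ρ) (by rw [neg_sq, hρ]) (by rw [map_neg, hρc]; ring) hlt⟩

end Intersection

lemma exp_I_mul_sub_exp_I_mul (α β : ℂ) :
    exp (I * β) - exp (I * α) = 2 * I * sin ((β - α) / 2) * exp (I * ((α + β) / 2)) := by
  rw [mul_right_comm 2 I, two_sin]
  have e₁ : exp (-((β - α) / 2) * I) * exp (I * ((α + β) / 2)) = exp (I * α) := by
    rw [← exp_add]; ring_nf
  have e₂ : exp ((β - α) / 2 * I) * exp (I * ((α + β) / 2)) = exp (I * β) := by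
    rw [← exp_add]; ring_nf
  linear_combination (exp ((β - α) / 2 * I) * exp (I * ((α + β) / 2))
    - exp (-((β - α) / 2) * I) * exp (I * ((α + β) / 2))) * I_sq - e₂ + e₁

lemma exists_pos_exp_I_mul_sub_exp_I_mul {α β : ℝ} (h : α < β) (h' : β < α + 2 * Real.pi) :
    ∃ s : ℝ, 0 < s ∧ exp (I * β) - exp (I * α) = I * s * exp (I * ↑((α + β) / 2)) := by
  refine ⟨2 * Real.sin ((β - α) / 2),
    mul_pos two_pos (Real.sin_pos_of_pos_of_lt_pi (by linarith) (by linarith)), ?_⟩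
  rw [exp_I_mul_sub_exp_I_mul]
  push_cast
  ring

lemma exists_sq_eq_neg_mul_sq_and_conj_eq {t : ℝ} (ht : 0 ≤ t) {u : ℂ} (hu : ‖u‖ = 1) :
    ∃ r : ℂ, r ^ 2 = -t * u ^ 2 ∧ conj r = -r / u ^ 2 := by
  have hu0 := ne_zero_of_norm_eq_one hu
  refine ⟨I * Real.sqrt t * u, ?_, ?_⟩
  · rw [mul_pow, mul_pow, I_sq, ← ofReal_pow, Real.sq_sqrt ht]
    ring
  · rw [map_mul, map_mul, conj_I, conj_ofReal, ← inv_eq_conj hu]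
    field_simp

lemma exp_I_mul_ne_exp_I_mul {α β : ℝ} (h : α < β) (h' : β < α + 2 * Real.pi) :
    exp (I * β) ≠ exp (I * α) := by
  obtain ⟨s, hs, hsub⟩ := exists_pos_exp_I_mul_sub_exp_I_mul h h'
  rw [← sub_ne_zero, hsub]
  exact mul_ne_zero (mul_ne_zero I_ne_zero (ofReal_ne_zero.mpr hs.ne')) (exp_ne_zero _)

lemma exists_sq_eq_and_conj_eq_of_lt {θ₁ θ₂ θ₃ θ₄ : ℝ} (h12 : θ₁ < θ₂) (h23 : θ₂ < θ₃)
    (h34 : θ₃ < θ₄) (h41 : θ₄ < θ₁ + 2 * Real.pi) {a b c d : ℂ}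
    (ha : a = exp (I * θ₁)) (hb : b = exp (I * θ₂)) (hc : c = exp (I * θ₃))
    (hd : d = exp (I * θ₄)) :
    ∃ r : ℂ, r ^ 2 = (a - b) * (b - c) * (c - d) * (d - a) ∧ conj r = -r / (a * b * c * d) := by
  obtain ⟨s₁, hs₁, hba⟩ := exists_pos_exp_I_mul_sub_exp_I_mul h12 (by linarith)
  obtain ⟨s₂, hs₂, hcb⟩ := exists_pos_exp_I_mul_sub_exp_I_mul h23 (by linarith)
  obtain ⟨s₃, hs₃, hdc⟩ := exists_pos_exp_I_mul_sub_exp_I_mul h34 (by linarith)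
  obtain ⟨s₄, hs₄, hda⟩ :=
    exists_pos_exp_I_mul_sub_exp_I_mul (h12.trans (h23.trans h34)) h41
  set u := exp (I * ↑((θ₁ + θ₂ + θ₃ + θ₄) / 2))
  have hu : u ^ 2 = exp (I * ↑((θ₁ + θ₂) / 2)) * exp (I * ↑((θ₂ + θ₃) / 2)) *
      exp (I * ↑((θ₃ + θ₄) / 2)) * exp (I * ↑((θ₁ + θ₄) / 2)) := by
    simp only [u, sq, ← exp_add]; congr 1; push_cast; ring
  have habcd : a * b * c * d = u ^ 2 := by
    simp only [ha, hb, hc, hd, u, sq, ← exp_add]; congr 1; push_cast; ring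
  have hP : (a - b) * (b - c) * (c - d) * (d - a) = -↑(s₁ * s₂ * s₃ * s₄) * u ^ 2 := by
    rw [show (a - b) * (b - c) * (c - d) * (d - a) =
        -((b - a) * (c - b) * (d - c) * (d - a)) by ring, ha, hb, hc, hd, hba, hcb, hdc, hda, hu]
    simp only [ofReal_mul]
    linear_combination (-s₁ * s₂ * s₃ * s₄ * exp (I * ↑((θ₁ + θ₂) / 2)) *
      exp (I * ↑((θ₂ + θ₃) / 2)) * exp (I * ↑((θ₃ + θ₄) / 2)) * exp (I * ↑((θ₁ + θ₄) / 2)) *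
      (I ^ 2 - 1)) * I_sq
  obtain ⟨r, hr, hrc⟩ :=
    exists_sq_eq_neg_mul_sq_and_conj_eq (by positivity : (0 : ℝ) ≤ s₁ * s₂ * s₃ * s₄)
      (norm_exp_I_mul_ofReal _)
  exact ⟨r, hP ▸ hr, habcd ▸ hrc⟩

theorem stmt15 (θ₁ θ₂ θ₃ θ₄ : ℝ)
    (h12 : θ₁ < θ₂) (h23 : θ₂ < θ₃) (h34 : θ₃ < θ₄) (h41 : θ₄ < θ₁ + 2 * Real.pi)
    (a b c d : ℂ)
    (hea : a = Complex.exp (Complex.I * (θ₁ : ℂ)))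
    (heb : b = Complex.exp (Complex.I * (θ₂ : ℂ)))
    (hec : c = Complex.exp (Complex.I * (θ₃ : ℂ)))
    (hed : d = Complex.exp (Complex.I * (θ₄ : ℂ)))
    (hden : a - b + c - d ≠ 0) :
    ∃ r : ℂ, r ^ 2 = (a - b) * (b - c) * (c - d) * (d - a) ∧
      ∃ ε : ℂ, (ε = 1 ∨ ε = -1) ∧
        ‖(a * c - b * d + ε * r) / (a - b + c - d)‖ < 1 ∧
        (a * c - b * d + ε * r) / (a - b + c - d) ∈ Jstar a c ∧
        (a * c - b * d + ε * r) / (a - b + c - d) ∈ Jstar b d := by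
  obtain ⟨r, hr, hrc⟩ := exists_sq_eq_and_conj_eq_of_lt h12 h23 h34 h41 hea heb hec hed
  have h13 : θ₁ < θ₃ := h12.trans h23
  have h14 : θ₁ < θ₄ := h13.trans h34
  have h24 : θ₂ < θ₄ := h23.trans h34
  subst hea heb hec hed
  refine ⟨r, hr, exists_sign_geodesicMeet_mem_Jstar (norm_exp_I_mul_ofReal _)
    (norm_exp_I_mul_ofReal _) (norm_exp_I_mul_ofReal _) (norm_exp_I_mul_ofReal _)
    ?_ ?_ ?_ ?_ ?_ ?_ hden hr hrc⟩
  exacts [(exp_I_mul_ne_exp_I_mul h12 (by linarith)).symm,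
    (exp_I_mul_ne_exp_I_mul h23 (by linarith)).symm,
    (exp_I_mul_ne_exp_I_mul h34 (by linarith)).symm,
    exp_I_mul_ne_exp_I_mul h14 h41,
    (exp_I_mul_ne_exp_I_mul h13 (by linarith)).symm,
    (exp_I_mul_ne_exp_I_mul h24 (by linarith)).symm]
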